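/- Let ρ ∈ ℝ, let k ≥ 1 be an integer and let τ ≥ 1/2. Then | ₂F₁(−k; iτ + ρ + 1/2; 1 + 2iτ; 2) | ≤ (2^{k−1}/τ) · [ (2(|ρ|+1))_k − 1 ]. -/

import Mathlib

open MeasureTheory

/-- Complex Pochhammer symbol `(a)_m = a (a+1) ⋯ (a+m−1)`. -/
noncomputable def pochC (a : ℂ) (m : ℕ) : ℂ := ∏ j ∈ Finset.range m, (a + j)

/-- Real Pochhammer symbol `(a)_m = a (a+1) ⋯ (a+m−1)`. -/
noncomputable def pochR (a : ℝ) (m : ℕ) : ℝ := ∏ j ∈ Finset.range m, (a + j)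

/-- Terminating hypergeometric sum
`₂F₁(−k; a; c; 2) = Σ_{m=0}^k (−k)_m (a)_m 2^m / ((c)_m m!)`. -/
noncomputable def twoF1neg (k : ℕ) (a c : ℂ) : ℂ :=
  ∑ m ∈ Finset.range (k + 1),
    pochC (-(k : ℂ)) m * pochC a m * 2 ^ m / (pochC c m * (Nat.factorial m : ℂ))

/-! ### Auxiliary lemmas -/

lemma pochC_zero' (a : ℂ) : pochC a 0 = 1 := Finset.prod_range_zero _

lemma pochC_succ (a : ℂ) (m : ℕ) : pochC a (m+1) = pochC a m * (a + m) :=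
  Finset.prod_range_succ _ _

lemma pochC_succ' (a : ℂ) (m : ℕ) : pochC a (m+1) = a * pochC (a+1) m := by
  rw [pochC, Finset.prod_range_succ']
  have : ∀ x ∈ Finset.range m, (a + ((x+1 : ℕ) : ℂ)) = ((a+1) + (x:ℂ)) := by
    intro x _; push_cast; ring
  rw [Finset.prod_congr rfl this]
  simp [pochC, mul_comm]

lemma pochC_neg_zero (K m : ℕ) (h : K < m) : pochC (-(K:ℂ)) m = 0 :=
  Finset.prod_eq_zero (Finset.mem_range.2 h) (by simp)

lemma pochC_ne_zero (c : ℂ) (hc : ∀ m : ℕ, c + m ≠ 0) (m : ℕ) : pochC c m ≠ 0 := by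
  induction m with
  | zero => simp [pochC_zero']
  | succ n ih => rw [pochC_succ]; exact mul_ne_zero ih (hc n)

lemma twoF1neg_eq_sum (k M : ℕ) (h : k + 1 ≤ M) (a c : ℂ) :
    twoF1neg k a c = ∑ m ∈ Finset.range M,
      pochC (-(k : ℂ)) m * (pochC a m * 2 ^ m / (pochC c m * (Nat.factorial m : ℂ))) := by
  rw [twoF1neg, Finset.sum_subset (Finset.range_subset_range.2 h)]
  · exact Finset.sum_congr rfl (fun m _ => by ring)
  · intro m _ hm
    rw [pochC_neg_zero k m (by simpa using (Finset.mem_range.not.1 hm))]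
    ring

/-- The contiguous three-term recurrence at `z = 2`:
`(c + (k+1)) F_{k+2} = (c - 2a) F_{k+1} + (k+1) F_k`. -/
lemma twoF1neg_rec (a c : ℂ) (hc : ∀ m : ℕ, c + m ≠ 0) (k : ℕ) :
    (c + ((k:ℂ)+1)) * twoF1neg (k+2) a c
      = (c - 2*a) * twoF1neg (k+1) a c + ((k:ℂ)+1) * twoF1neg k a c := by
  set u : ℕ → ℂ := fun m => pochC a m * 2 ^ m / (pochC c m * (Nat.factorial m : ℂ)) with hu
  have hfac : ∀ m : ℕ, ((Nat.factorial m : ℂ)) ≠ 0 := fun m =>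
    Nat.cast_ne_zero.2 (Nat.factorial_ne_zero m)
  have hucc : ∀ m : ℕ, u (m+1) * ((c + m) * ((m:ℂ)+1)) = u m * (2 * (a + m)) := by
    intro m
    have h1 : pochC c (m+1) = pochC c m * (c + m) := pochC_succ c m
    have h2 : pochC a (m+1) = pochC a m * (a + m) := pochC_succ a m
    have h3 : ((Nat.factorial (m+1) : ℂ)) = ((m:ℂ)+1) * (Nat.factorial m : ℂ) := by
      push_cast [Nat.factorial_succ]; ring
    have hp := pochC_ne_zero c hc m
    have hcm := hc m
    have hm1 : ((m:ℂ)+1) ≠ 0 := Nat.cast_add_one_ne_zero m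
    have hf := hfac m
    simp only [hu, h1, h2, h3]
    field_simp
    ring
  set w : ℕ → ℂ := fun m => (m : ℂ) * (c + m - 1) * pochC (-(k:ℂ)-1) (m-1) * u m with hw
  have key : ∀ m : ℕ,
      ((c + ((k:ℂ)+1)) * pochC (-(k:ℂ)-2) m - (c - 2*a) * pochC (-(k:ℂ)-1) m
        - ((k:ℂ)+1) * pochC (-(k:ℂ)) m) * u m = w (m+1) - w m := by
    intro m
    have hw1 : w (m+1) = 2 * (a + m) * pochC (-(k:ℂ)-1) m * u m := by
      have e1 : w (m+1) = ((m:ℂ)+1) * (c + m) * pochC (-(k:ℂ)-1) m * u (m+1) := by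
        simp only [hw, Nat.add_sub_cancel]
        push_cast
        ring
      rw [e1]
      calc ((m:ℂ)+1) * (c + m) * pochC (-(k:ℂ)-1) m * u (m+1)
          = pochC (-(k:ℂ)-1) m * (u (m+1) * ((c + m) * ((m:ℂ)+1))) := by ring
        _ = pochC (-(k:ℂ)-1) m * (u m * (2 * (a + m))) := by rw [hucc m]
        _ = 2 * (a + m) * pochC (-(k:ℂ)-1) m * u m := by ring
    rw [hw1]
    match m with
    | 0 =>
      simp only [hw, Nat.cast_zero, zero_mul, mul_zero, sub_zero, pochC_zero']
      ring
    | (n+1) =>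
      have hwn : w (n+1) = ((n:ℂ)+1) * (c + n) * pochC (-(k:ℂ)-1) n * u (n+1) := by
        simp only [hw, Nat.add_sub_cancel]
        push_cast
        ring
      rw [hwn]
      have e2 : pochC (-(k:ℂ)-2) (n+1) = (-(k:ℂ)-2) * pochC (-(k:ℂ)-1) n := by
        have := pochC_succ' (-(k:ℂ)-2) n
        rw [show (-(k:ℂ)-2)+1 = -(k:ℂ)-1 by ring] at this
        exact this
      have e3 : pochC (-(k:ℂ)-1) (n+1) = pochC (-(k:ℂ)-1) n * (-(k:ℂ)-1+n) := pochC_succ _ n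
      have hX : (-(k:ℂ)-1) * pochC (-(k:ℂ)) (n+1)
          = pochC (-(k:ℂ)-1) n * (-(k:ℂ)-1+n) * (-(k:ℂ)-1+((n:ℂ)+1)) := by
        have h1 := pochC_succ' (-(k:ℂ)-1) (n+1)
        rw [show (-(k:ℂ)-1)+1 = -(k:ℂ) by ring] at h1
        have h2 : pochC (-(k:ℂ)-1) (n+2)
            = pochC (-(k:ℂ)-1) n * (-(k:ℂ)-1+n) * (-(k:ℂ)-1+((n:ℂ)+1)) := by
          rw [pochC_succ, pochC_succ]
          push_cast
          ring
        rw [← h1]; exact h2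
      rw [e2, e3]
      push_cast
      linear_combination (u (n+1)) * hX
  have hsum : ∑ m ∈ Finset.range (k+4),
      ((c + ((k:ℂ)+1)) * pochC (-(k:ℂ)-2) m - (c - 2*a) * pochC (-(k:ℂ)-1) m
        - ((k:ℂ)+1) * pochC (-(k:ℂ)) m) * u m = 0 := by
    rw [Finset.sum_congr rfl (fun m _ => key m), Finset.sum_range_sub w (k+4)]
    have hzero : pochC (-(k:ℂ)-1) (k+3) = 0 := by
      have := pochC_neg_zero (k+1) (k+3) (by omega)
      rwa [show (-(((k+1):ℕ)):ℂ) = -(k:ℂ)-1 by push_cast; ring] at this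
    simp [hw, hzero]
  have expand : ∑ m ∈ Finset.range (k+4),
      ((c + ((k:ℂ)+1)) * pochC (-(k:ℂ)-2) m - (c - 2*a) * pochC (-(k:ℂ)-1) m
        - ((k:ℂ)+1) * pochC (-(k:ℂ)) m) * u m
      = (c + ((k:ℂ)+1)) * (∑ m ∈ Finset.range (k+4), pochC (-(k:ℂ)-2) m * u m)
        - (c - 2*a) * (∑ m ∈ Finset.range (k+4), pochC (-(k:ℂ)-1) m * u m)
        - ((k:ℂ)+1) * (∑ m ∈ Finset.range (k+4), pochC (-(k:ℂ)) m * u m) := by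
    rw [Finset.mul_sum, Finset.mul_sum, Finset.mul_sum, ← Finset.sum_sub_distrib,
      ← Finset.sum_sub_distrib]
    exact Finset.sum_congr rfl (fun m _ => by ring)
  have t2 : twoF1neg (k+2) a c = ∑ m ∈ Finset.range (k+4), pochC (-(k:ℂ)-2) m * u m := by
    rw [twoF1neg_eq_sum (k+2) (k+4) (by omega) a c]
    apply Finset.sum_congr rfl
    intro m _
    rw [show (-(((k+2):ℕ)):ℂ) = -(k:ℂ)-2 by push_cast; ring]
  have t1 : twoF1neg (k+1) a c = ∑ m ∈ Finset.range (k+4), pochC (-(k:ℂ)-1) m * u m := by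
    rw [twoF1neg_eq_sum (k+1) (k+4) (by omega) a c]
    apply Finset.sum_congr rfl
    intro m _
    rw [show (-(((k+1):ℕ)):ℂ) = -(k:ℂ)-1 by push_cast; ring]
  have t0 : twoF1neg k a c = ∑ m ∈ Finset.range (k+4), pochC (-(k:ℂ)) m * u m :=
    twoF1neg_eq_sum k (k+4) (by omega) a c
  rw [t2, t1, t0]
  rw [expand] at hsum
  linear_combination hsum

lemma twoF1neg_zero' (a c : ℂ) : twoF1neg 0 a c = 1 := by
  simp [twoF1neg, pochC_zero']

lemma twoF1neg_one' (a c : ℂ) (hc : c ≠ 0) : twoF1neg 1 a c = (c - 2*a)/c := by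
  rw [twoF1neg]
  rw [Finset.sum_range_succ, Finset.sum_range_succ, Finset.sum_range_zero]
  simp [pochC_succ, pochC_zero', Nat.factorial]
  field_simp
  ring

/-! ### Real Pochhammer estimates -/

lemma pochR_zero' (x : ℝ) : pochR x 0 = 1 := Finset.prod_range_zero _

lemma pochR_succ (x : ℝ) (m : ℕ) : pochR x (m+1) = pochR x m * (x + m) :=
  Finset.prod_range_succ _ _

lemma one_le_pochR (s : ℝ) (hs : 0 ≤ s) (m : ℕ) : 1 ≤ pochR (2*(s+1)) m := by
  induction m with
  | zero => simp [pochR_zero']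
  | succ n ih =>
    rw [pochR_succ]
    have hn : (0:ℝ) ≤ n := Nat.cast_nonneg n
    nlinarith

lemma pochR_mono (s : ℝ) (hs : 0 ≤ s) (m : ℕ) :
    pochR (2*(s+1)) m ≤ pochR (2*(s+1)) (m+1) := by
  rw [pochR_succ]
  have h1 := one_le_pochR s hs m
  have hn : (0:ℝ) ≤ m := Nat.cast_nonneg m
  nlinarith

lemma core_ineq (s : ℝ) (hs : 0 ≤ s) (n : ℕ) :
    8*s*(pochR (2*(s+1)) (n+2) - 1) + 2*((n:ℝ)+2)*(pochR (2*(s+1)) (n+1) - 1)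
      ≤ 8*(pochR (2*(s+1)) (n+3) - 1) := by
  have e3 : pochR (2*(s+1)) (n+3) = pochR (2*(s+1)) (n+2) * (2*(s+1) + ((n:ℝ)+2)) := by
    have := pochR_succ (2*(s+1)) (n+2)
    rw [this]; push_cast; ring
  have h1 := one_le_pochR s hs (n+1)
  have h2 := one_le_pochR s hs (n+2)
  have hmono := pochR_mono s hs (n+1)
  have hn : (0:ℝ) ≤ n := Nat.cast_nonneg n
  nlinarith [mul_nonneg hs (sub_nonneg.2 h2), mul_nonneg hn (sub_nonneg.2 h2),
    mul_nonneg hs (sub_nonneg.2 h1), mul_nonneg hn (sub_nonneg.2 h1),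
    mul_nonneg (mul_nonneg hs hn) (sub_nonneg.2 h2)]

lemma core_ineq0 (s : ℝ) (hs : 0 ≤ s) :
    4*s*(pochR (2*(s+1)) 1 - 1) + 1 ≤ 4*(pochR (2*(s+1)) 2 - 1) := by
  have e1 : pochR (2*(s+1)) 1 = 2*(s+1) := by
    rw [pochR_succ, pochR_zero']; push_cast; ring
  have e2 : pochR (2*(s+1)) 2 = (2*(s+1)) * (2*(s+1)+1) := by
    rw [pochR_succ, e1]; push_cast; ring
  rw [e1, e2]
  nlinarith

/-! ### Complex facts about `c = 1 + 2iτ` -/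

lemma cim (τ : ℝ) (m : ℕ) : ((1 + 2*Complex.I*(τ:ℂ)) + (m:ℕ)).im = 2*τ := by
  simp [Complex.add_im, Complex.mul_im]

lemma cabs (τ : ℝ) (hτ : 1/2 ≤ τ) (m : ℕ) :
    2*τ ≤ ‖(1 + 2*Complex.I*(τ:ℂ)) + (m:ℕ)‖ := by
  have h := Complex.abs_im_le_norm ((1 + 2*Complex.I*(τ:ℂ)) + (m:ℕ))
  rw [cim] at h
  have : |2*τ| = 2*τ := abs_of_nonneg (by linarith)
  linarith [this ▸ h]

lemma cne (τ : ℝ) (hτ : 1/2 ≤ τ) (m : ℕ) : (1 + 2*Complex.I*(τ:ℂ)) + (m:ℕ) ≠ 0 := by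
  intro h
  have := cim τ m
  rw [h] at this
  simp at this
  linarith

/-! ### Main theorem -/

theorem twoF1neg_bound (ρ : ℝ) (k : ℕ) (hk : 1 ≤ k) (τ : ℝ) (hτ : 1/2 ≤ τ) :
    ‖twoF1neg k (Complex.I * τ + ρ + 1/2) (1 + 2 * Complex.I * τ)‖ ≤
      (2:ℝ) ^ (k - 1) / τ * (pochR (2 * (|ρ| + 1)) k - 1) := by
  obtain ⟨n, rfl⟩ : ∃ n, k = n + 1 := ⟨k - 1, (Nat.succ_pred_eq_of_pos hk).symm⟩
  have hτ0 : 0 < τ := by linarith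
  set a : ℂ := Complex.I * τ + ρ + 1/2 with ha
  set c : ℂ := 1 + 2 * Complex.I * τ with hcdef
  have hcm : ∀ m : ℕ, c + m ≠ 0 := fun m => by
    have := cne τ hτ m; rw [hcdef]; exact this
  have habsm : ∀ m : ℕ, 2*τ ≤ ‖c + m‖ := fun m => by
    have := cabs τ hτ m; rw [hcdef]; exact this
  have hr : (0:ℝ) ≤ |ρ| := abs_nonneg ρ
  set s : ℝ := |ρ| with hsdef
  set P : ℕ → ℝ := fun m => pochR (2*(s+1)) m with hP
  set b : ℕ → ℝ := fun m => Nat.casesOn m (1:ℝ) (fun j => 2^j/τ * (P (j+1) - 1)) with hb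
  have hb0 : b 0 = 1 := rfl
  have hbs : ∀ j : ℕ, b (j+1) = 2^j/τ * (P (j+1) - 1) := fun j => rfl
  have hPge : ∀ j : ℕ, 1 ≤ P j := fun j => one_le_pochR s hr j
  have hbnn : ∀ j : ℕ, 0 ≤ b j := by
    intro j
    match j with
    | 0 => rw [hb0]; norm_num
    | (i+1) =>
      rw [hbs]
      have h1 : 0 ≤ P (i+1) - 1 := by linarith [hPge (i+1)]
      exact mul_nonneg (by positivity) h1
  have hdiv : ∀ x : ℝ, 0 ≤ x → x/τ ≤ 2*x := by
    intro x hx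
    rw [div_le_iff₀ hτ0]
    nlinarith
  -- the real recursion inequality
  have hstep : ∀ j : ℕ, 2*s*(b (j+1)) + ((j:ℝ)+1)*(b j) ≤ 2*τ*(b (j+2)) := by
    intro j
    match j with
    | 0 =>
      show 2*s*(2^0/τ*(P 1 - 1)) + (((0:ℕ):ℝ)+1)*1 ≤ 2*τ*(2^1/τ*(P 2 - 1))
      have hA : 0 ≤ P 1 - 1 := by linarith [hPge 1]
      have l1 : 2^0/τ * (P 1 - 1) ≤ 2*(P 1 - 1) := by
        rw [show ((2:ℝ)^0/τ * (P 1 - 1)) = (P 1 - 1)/τ by ring]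
        exact hdiv _ hA
      have hR : 2*τ*(2^1/τ * (P 2 - 1)) = 4*(P 2 - 1) := by
        field_simp; ring
      rw [hR]
      have hcore := core_ineq0 s hr
      have h2s : (0:ℝ) ≤ 2*s := by linarith
      push_cast
      nlinarith [mul_le_mul_of_nonneg_left l1 h2s]
    | (m+1) =>
      show 2*s*(2^(m+1)/τ*(P (m+2) - 1)) + (((m+1:ℕ):ℝ)+1)*(2^m/τ*(P (m+1) - 1))
        ≤ 2*τ*(2^(m+2)/τ*(P (m+3) - 1))
      have hA : 0 ≤ P (m+2) - 1 := by linarith [hPge (m+2)]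
      have hB : 0 ≤ P (m+1) - 1 := by linarith [hPge (m+1)]
      have hpow : (0:ℝ) ≤ 2^m := by positivity
      have l1 : 2^(m+1)/τ * (P (m+2) - 1) ≤ 2*(2^(m+1)*(P (m+2) - 1)) := by
        rw [show ((2:ℝ)^(m+1)/τ * (P (m+2) - 1)) = (2^(m+1)*(P (m+2) - 1))/τ by ring]
        exact hdiv _ (by positivity)
      have l2 : 2^m/τ * (P (m+1) - 1) ≤ 2*(2^m*(P (m+1) - 1)) := by
        rw [show ((2:ℝ)^m/τ * (P (m+1) - 1)) = (2^m*(P (m+1) - 1))/τ by ring]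
        exact hdiv _ (by positivity)
      have hcore := mul_le_mul_of_nonneg_left (core_ineq s hr m) hpow
      calc 2*s*(2^(m+1)/τ*(P (m+2)-1)) + (((m+1:ℕ):ℝ)+1)*(2^m/τ*(P (m+1)-1))
          ≤ 2*s*(2*(2^(m+1)*(P (m+2)-1))) + (((m+1:ℕ):ℝ)+1)*(2*(2^m*(P (m+1)-1))) := by
            refine add_le_add (mul_le_mul_of_nonneg_left l1 (by linarith))
              (mul_le_mul_of_nonneg_left l2 (by positivity))
        _ = 2^m*(8*s*(P (m+2)-1) + 2*((m:ℝ)+2)*(P (m+1)-1)) := by push_cast; ring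
        _ ≤ 2^m*(8*(P (m+3)-1)) := hcore
        _ = 2*τ*(2^(m+2)/τ*(P (m+3)-1)) := by field_simp; ring
  -- base cases
  have habs0 : ‖twoF1neg 0 a c‖ ≤ b 0 := by
    rw [twoF1neg_zero', hb0]
    simp
  have hc2a : c - 2*a = -2*(ρ:ℂ) := by
    rw [ha, hcdef]; ring
  have habsneg : ‖-2*(ρ:ℂ)‖ = 2*s := by
    rw [show (-2*(ρ:ℂ)) = ((-2*ρ:ℝ):ℂ) by push_cast; ring, Complex.norm_real, Real.norm_eq_abs, hsdef,
      abs_mul]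
    norm_num
  have habs1 : ‖twoF1neg 1 a c‖ ≤ b 1 := by
    have hc0 : c ≠ 0 := by
      have := hcm 0
      simpa using this
    rw [twoF1neg_one' a c hc0, hc2a, norm_div, habsneg]
    have habsc : 2*τ ≤ ‖c‖ := by
      have := habsm 0
      simpa using this
    have step1 : 2*s/‖c‖ ≤ 2*s/(2*τ) := by
      gcongr <;> linarith
    have step2 : 2*s/(2*τ) = s/τ := by
      field_simp
    have hb1 : b 1 = 2^0/τ * (P 1 - 1) := rfl
    rw [hb1]
    have hP1 : P 1 = 2*(s+1) := by
      rw [hP]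
      show pochR (2*(s+1)) 1 = 2*(s+1)
      rw [pochR_succ, pochR_zero']; push_cast; ring
    rw [hP1]
    have step3 : s/τ ≤ 2^0/τ * (2*(s+1) - 1) := by
      rw [show ((2:ℝ)^0/τ * (2*(s+1) - 1)) = (2*s+1)/τ by ring]
      gcongr
      linarith
    linarith
  have habsnat : ∀ j : ℕ, ‖(j:ℂ)+1‖ = (j:ℝ)+1 := by
    intro j
    rw [show ((j:ℂ)+1) = ((j+1:ℕ):ℂ) by push_cast; ring, Complex.norm_natCast]
    push_cast; ring
  have main : ∀ m : ℕ, ‖twoF1neg m a c‖ ≤ b m ∧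
      ‖twoF1neg (m+1) a c‖ ≤ b (m+1) := by
    intro m
    induction m with
    | zero => exact ⟨habs0, habs1⟩
    | succ j ih =>
      refine ⟨ih.2, ?_⟩
      have hrec := twoF1neg_rec a c hcm j
      rw [hc2a] at hrec
      have habsj : 2*τ ≤ ‖c + ((j:ℂ)+1)‖ := by
        have := habsm (j+1)
        push_cast at this
        exact this
      have hnn : 0 ≤ ‖twoF1neg (j+2) a c‖ := norm_nonneg _
      have htri : ‖-2*(ρ:ℂ) * twoF1neg (j+1) a c + ((j:ℂ)+1) * twoF1neg j a c‖
          ≤ 2*s*(b (j+1)) + ((j:ℝ)+1)*(b j) := by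
        calc ‖-2*(ρ:ℂ) * twoF1neg (j+1) a c + ((j:ℂ)+1) * twoF1neg j a c‖
            ≤ ‖-2*(ρ:ℂ) * twoF1neg (j+1) a c‖
              + ‖((j:ℂ)+1) * twoF1neg j a c‖ := norm_add_le _ _
          _ = 2*s*‖twoF1neg (j+1) a c‖
              + ((j:ℝ)+1)*‖twoF1neg j a c‖ := by
              rw [norm_mul, norm_mul, norm_mul, habsnat, Complex.norm_real, Real.norm_eq_abs,
                show ‖(-2:ℂ)‖ = 2 by norm_num, ← hsdef]
          _ ≤ 2*s*(b (j+1)) + ((j:ℝ)+1)*(b j) := by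
              refine add_le_add (mul_le_mul_of_nonneg_left ih.2 (by linarith))
                (mul_le_mul_of_nonneg_left ih.1 (by positivity))
      have hchain : 2*τ * ‖twoF1neg (j+2) a c‖ ≤ 2*τ*(b (j+2)) := by
        calc 2*τ * ‖twoF1neg (j+2) a c‖
            ≤ ‖c + ((j:ℂ)+1)‖ * ‖twoF1neg (j+2) a c‖ :=
              mul_le_mul_of_nonneg_right habsj hnn
          _ = ‖(c + ((j:ℂ)+1)) * twoF1neg (j+2) a c‖ := (norm_mul _ _).symm
          _ = ‖-2*(ρ:ℂ) * twoF1neg (j+1) a c + ((j:ℂ)+1) * twoF1neg j a c‖ := by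
              rw [hrec]
          _ ≤ 2*s*(b (j+1)) + ((j:ℝ)+1)*(b j) := htri
          _ ≤ 2*τ*(b (j+2)) := hstep j
      have h2τ : (0:ℝ) < 2*τ := by linarith
      exact le_of_mul_le_mul_left hchain h2τ
  have fin := (main n).2
  have hbn : b (n+1) = 2^n/τ * (P (n+1) - 1) := rfl
  rw [hbn] at fin
  have hPn : P (n+1) = pochR (2*(s+1)) (n+1) := rfl
  rw [hPn] at fin
  show ‖twoF1neg (n+1) a c‖ ≤ 2^(n+1-1)/τ * (pochR (2*(s+1)) (n+1) - 1)
  rw [show n+1-1 = n from rfl]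
  exact fin
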